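/- Let A be a real symmetric positive definite n×n matrix with eigendecomposition A = Q D Qᵀ (Q orthogonal, D diagonal with positive entries). Then for any τ > 0, ‖exp(−τA) − P(τA)‖ ≤ κ(Q)·M·λ_max³·τ³/6, where P(x) = 2(x² + 2x + 2)⁻¹ applied functionally, κ(Q) = ‖Q‖·‖Qᵀ‖ in the operator ∞-norm, λ_max is the largest eigenvalue of A, and M = sup_{ξ≥0}|e^{−ξ} + P'''(ξ)|. -/

import Mathlib

open Matrix

attribute [local instance]
  Matrix.linftyOpNormedAddCommGroup Matrix.linftyOpNormedRing Matrix.linftyOpNormedAlgebra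

/-- The matrix `(0,2)` Padé approximant of the (negative) exponential:
`P(B) = 2 (B² + 2B + 2I)⁻¹`. -/
noncomputable def padeMatrix {n : ℕ} (B : Matrix (Fin n) (Fin n) ℝ) : Matrix (Fin n) (Fin n) ℝ :=
  (2 : Matrix (Fin n) (Fin n) ℝ) * (B ^ 2 + 2 * B + 2)⁻¹

/-!
Conjugating by `Q` reduces both `exp (-τA)` and `P (τA)` to diagonal matrices, so the error is
`Q · diag (g (τ λᵢ)) · Q⁻¹` with `g x = e^{-x} - 2 / (x² + 2x + 2)`, and the `∞`-operator norm of a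
diagonal matrix is its largest entry. The Padé approximant agrees with `e^{-x}` to second order at
`0` (`g 0 = g' 0 = g'' 0 = 0`), so Taylor's theorem with Lagrange remainder gives
`|g x| ≤ M x³ / 6` for `x ≥ 0`, and `τ λᵢ ≤ τ λ_max`.
-/

open Nat in
theorem abs_le_of_iteratedDeriv_eq_zero {f : ℝ → ℝ} {n : ℕ} (hf : ContDiff ℝ (n + 1) f)
    (h0 : ∀ k ≤ n, iteratedDeriv k f 0 = 0) {M x : ℝ} (hx : 0 ≤ x)
    (hM : ∀ ξ ∈ Set.Ioo 0 x, |iteratedDeriv (n + 1) f ξ| ≤ M) :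
    |f x| ≤ M * x ^ (n + 1) / (n + 1)! := by
  rcases hx.eq_or_lt with rfl | hx
  · simpa using h0 0 (Nat.zero_le n)
  obtain ⟨ξ, hξ, hTaylor⟩ := taylor_mean_remainder_lagrange_iteratedDeriv hx.ne hf.contDiffOn
  have hpoly : taylorWithinEval f n (Set.uIcc 0 x) 0 x = 0 := by
    refine (taylor_within_apply ..).trans (Finset.sum_eq_zero fun k hk => ?_)
    have hk : k ≤ n := Nat.lt_succ_iff.mp (Finset.mem_range.mp hk)
    rw [iteratedDerivWithin_eq_iteratedDeriv (uniqueDiffOn_uIcc hx.ne)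
      (hf.contDiffAt.of_le (by exact_mod_cast hk.trans n.le_succ)) Set.left_mem_uIcc,
      h0 k hk, smul_zero]
  rw [Set.uIoo_of_le hx.le] at hξ
  rw [hpoly, sub_zero, sub_zero] at hTaylor
  rw [hTaylor, abs_div, abs_mul, abs_of_pos (pow_pos hx _), Nat.abs_cast]
  gcongr
  exact hM ξ hξ

noncomputable def padeError (x : ℝ) : ℝ := Real.exp (-x) - 2 / (x ^ 2 + 2 * x + 2)

lemma padeDenom_pos (x : ℝ) : 0 < x ^ 2 + 2 * x + 2 := by nlinarith [sq_nonneg (x + 1)]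

lemma hasDerivAt_padeDenom (x : ℝ) :
    HasDerivAt (fun t : ℝ => t ^ 2 + 2 * t + 2) (2 * x + 2) x :=
  (((hasDerivAt_pow 2 x).add ((hasDerivAt_id x).const_mul 2)).add_const 2).congr_deriv
    (by ring)

lemma hasDerivAt_exp_neg (x : ℝ) : HasDerivAt (fun t => Real.exp (-t)) (-Real.exp (-x)) x := by
  simpa using (hasDerivAt_neg x).exp

lemma contDiff_padeError : ContDiff ℝ 3 padeError :=
  (Real.contDiff_exp.comp contDiff_neg).sub
    (contDiff_const.div (by fun_prop) fun x => (padeDenom_pos x).ne')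

lemma iteratedDeriv_one_padeError : iteratedDeriv 1 padeError =
    fun x => -Real.exp (-x) + (4 * x + 4) / (x ^ 2 + 2 * x + 2) ^ 2 := by
  rw [iteratedDeriv_one]
  funext x
  refine ((hasDerivAt_exp_neg x).sub
    ((hasDerivAt_const x 2).div (hasDerivAt_padeDenom x) (padeDenom_pos x).ne')).deriv.trans ?_
  field_simp
  ring

lemma iteratedDeriv_two_padeError : iteratedDeriv 2 padeError =
    fun x => Real.exp (-x) - (12 * x ^ 2 + 24 * x + 8) / (x ^ 2 + 2 * x + 2) ^ 3 := by
  rw [iteratedDeriv_succ, iteratedDeriv_one_padeError]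
  funext x
  have hnum : HasDerivAt (fun t : ℝ => 4 * t + 4) 4 x := by
    simpa using ((hasDerivAt_id x).const_mul (4 : ℝ)).add_const 4
  refine ((hasDerivAt_exp_neg x).neg.add (hnum.div ((hasDerivAt_padeDenom x).pow 2)
    (pow_ne_zero 2 (padeDenom_pos x).ne'))).deriv.trans ?_
  simp only [Pi.pow_apply, Nat.cast_ofNat, Nat.reduceSub, pow_one]
  field_simp
  ring

lemma iteratedDeriv_three_padeError : iteratedDeriv 3 padeError =
    fun x => -Real.exp (-x) + 48 * x * (x + 1) * (x + 2) / (x ^ 2 + 2 * x + 2) ^ 4 := by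
  rw [iteratedDeriv_succ, iteratedDeriv_two_padeError]
  funext x
  have hnum : HasDerivAt (fun t : ℝ => 12 * t ^ 2 + 24 * t + 8) (24 * x + 24) x :=
    ((((hasDerivAt_pow 2 x).const_mul 12).add
      ((hasDerivAt_id x).const_mul 24)).add_const 8).congr_deriv (by ring)
  refine ((hasDerivAt_exp_neg x).sub (hnum.div ((hasDerivAt_padeDenom x).pow 3)
    (pow_ne_zero 3 (padeDenom_pos x).ne'))).deriv.trans ?_
  simp only [Pi.pow_apply, Nat.cast_ofNat, Nat.reduceSub]
  field_simp
  ring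

/-- The constant `M` of the theorem: `e^{-ξ} + P'''(ξ)` is `-(iteratedDeriv 3 padeError ξ)`. -/
noncomputable def padeErrorThirdDerivSup : ℝ :=
  sSup {y : ℝ | ∃ ξ : ℝ, 0 ≤ ξ ∧
    y = |Real.exp (-ξ) + (-(48 * ξ * (ξ + 1) * (ξ + 2)) / (ξ ^ 2 + 2 * ξ + 2) ^ 4)|}

lemma abs_iteratedDeriv_three_padeError_le {ξ : ℝ} (hξ : 0 ≤ ξ) :
    |iteratedDeriv 3 padeError ξ| ≤ padeErrorThirdDerivSup := by
  refine le_csSup ⟨49, ?_⟩ ⟨ξ, hξ, ?_⟩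
  · rintro y ⟨ξ, hξ, rfl⟩
    have hexp : Real.exp (-ξ) ≤ 1 := Real.exp_le_one_iff.mpr (neg_nonpos.mpr hξ)
    have hden : 1 ≤ ξ ^ 2 + 2 * ξ + 2 := by nlinarith
    have hrat : 48 * ξ * (ξ + 1) * (ξ + 2) / (ξ ^ 2 + 2 * ξ + 2) ^ 4 ≤ 48 := by
      rw [div_le_iff₀ (by positivity)]
      have hden_sq : (ξ ^ 2 + 2 * ξ + 2) ^ 2 ≤ (ξ ^ 2 + 2 * ξ + 2) ^ 4 :=
        pow_le_pow_right₀ hden (by norm_num)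
      nlinarith
    rw [neg_div, ← sub_eq_add_neg, abs_le]
    constructor <;> nlinarith [Real.exp_pos (-ξ),
      show 0 ≤ 48 * ξ * (ξ + 1) * (ξ + 2) / (ξ ^ 2 + 2 * ξ + 2) ^ 4 by positivity]
  · rw [iteratedDeriv_three_padeError, ← abs_neg]
    ring_nf

lemma padeErrorThirdDerivSup_nonneg : 0 ≤ padeErrorThirdDerivSup :=
  (abs_nonneg _).trans (abs_iteratedDeriv_three_padeError_le le_rfl)

lemma abs_padeError_le {x : ℝ} (hx : 0 ≤ x) :
    |padeError x| ≤ padeErrorThirdDerivSup * x ^ 3 / 6 := by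
  have hvanish : ∀ k ≤ 2, iteratedDeriv k padeError 0 = 0 := by
    intro k hk
    interval_cases k
    · norm_num [padeError]
    · rw [iteratedDeriv_one_padeError]
      norm_num
    · norm_num [iteratedDeriv_two_padeError]
  simpa [Nat.factorial] using abs_le_of_iteratedDeriv_eq_zero contDiff_padeError hvanish hx
    fun ξ hξ => abs_iteratedDeriv_three_padeError_le hξ.1.le

section PadeMatrix

variable {n : ℕ}

lemma padeMatrix_conj {U : Matrix (Fin n) (Fin n) ℝ} (hU : IsUnit U)
    (B : Matrix (Fin n) (Fin n) ℝ) :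
    padeMatrix (U * B * U⁻¹) = U * padeMatrix B * U⁻¹ := by
  have hdet := (isUnit_iff_isUnit_det U).mp hU
  have hmul : ∀ X Y : Matrix (Fin n) (Fin n) ℝ, U * X * U⁻¹ * (U * Y * U⁻¹) = U * (X * Y) * U⁻¹ :=
    fun X Y => by simp only [mul_assoc, nonsing_inv_mul_cancel_left U _ hdet]
  have hadd : ∀ X Y : Matrix (Fin n) (Fin n) ℝ, U * X * U⁻¹ + U * Y * U⁻¹ = U * (X + Y) * U⁻¹ :=
    fun X Y => by rw [mul_add, add_mul]
  have hsmul : ∀ X : Matrix (Fin n) (Fin n) ℝ, 2 * (U * X * U⁻¹) = U * (2 * X) * U⁻¹ := fun X => by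
    rw [← mul_assoc, ← mul_assoc, ← (Commute.ofNat_right U 2).eq, mul_assoc U]
  have htwo : (2 : Matrix (Fin n) (Fin n) ℝ) = U * 2 * U⁻¹ := by
    rw [(Commute.ofNat_right U 2).eq, mul_assoc, mul_nonsing_inv U hdet, mul_one]
  have hden : (U * B * U⁻¹) ^ 2 + 2 * (U * B * U⁻¹) + 2 = U * (B ^ 2 + 2 * B + 2) * U⁻¹ := by
    rw [sq, sq, hmul, hsmul, hadd, ← hadd (B * B + 2 * B) 2, ← htwo]
  rw [padeMatrix, padeMatrix, hden, Matrix.mul_inv_rev, Matrix.mul_inv_rev,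
    nonsing_inv_nonsing_inv U hdet, ← mul_assoc U, hsmul]

lemma padeMatrix_diagonal (d : Fin n → ℝ) :
    padeMatrix (diagonal d) = diagonal fun i => 2 / (d i ^ 2 + 2 * d i + 2) := by
  have hinv : (diagonal fun i => d i ^ 2 + 2 * d i + 2)⁻¹ =
      diagonal fun i => (d i ^ 2 + 2 * d i + 2)⁻¹ := by
    refine inv_eq_right_inv ?_
    rw [diagonal_mul_diagonal, ← diagonal_one]
    exact congrArg diagonal (funext fun i => mul_inv_cancel₀ (padeDenom_pos (d i)).ne')
  rw [padeMatrix, ← diagonal_ofNat, diagonal_pow, diagonal_mul_diagonal, diagonal_add,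
    diagonal_add]
  simp only [Pi.pow_apply]
  rw [hinv, diagonal_mul_diagonal]
  simp only [div_eq_mul_inv]

lemma exp_neg_diagonal_sub_padeMatrix (d : Fin n → ℝ) :
    NormedSpace.exp (-diagonal d) - padeMatrix (diagonal d) = diagonal (padeError ∘ d) := by
  rw [diagonal_neg, exp_diagonal, padeMatrix_diagonal, diagonal_sub]
  simp only [Pi.exp_def, ← Real.exp_eq_exp_ℝ]
  rfl

lemma norm_exp_neg_diagonal_sub_padeMatrix_le {d : Fin n → ℝ} {c : ℝ}
    (hd : ∀ i, 0 ≤ d i) (hdc : ∀ i, d i ≤ c) (hc : 0 ≤ c) :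
    ‖NormedSpace.exp (-diagonal d) - padeMatrix (diagonal d)‖ ≤
      padeErrorThirdDerivSup * c ^ 3 / 6 := by
  rw [exp_neg_diagonal_sub_padeMatrix, linfty_opNorm_diagonal,
    pi_norm_le_iff_of_nonneg (by have := padeErrorThirdDerivSup_nonneg; positivity)]
  intro i
  calc ‖padeError (d i)‖ ≤ padeErrorThirdDerivSup * d i ^ 3 / 6 := abs_padeError_le (hd i)
    _ ≤ padeErrorThirdDerivSup * c ^ 3 / 6 := by
      have := padeErrorThirdDerivSup_nonneg
      gcongr
      · exact hd i
      · exact hdc i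

end PadeMatrix

theorem pade_matrix_exp_error {n : ℕ} (A Q D : Matrix (Fin n) (Fin n) ℝ)
    (hA : A = Q * D * Qᵀ) (hQ : Qᵀ * Q = 1)
    (hDdiag : ∀ i j, i ≠ j → D i j = 0) (hDpos : ∀ i, 0 < D i i)
    (lmax : ℝ) (hlmax : IsGreatest {x : ℝ | ∃ i, x = D i i} lmax)
    (M : ℝ)
    (hM : M = sSup {y : ℝ | ∃ ξ : ℝ, 0 ≤ ξ ∧
      y = |Real.exp (-ξ) + (-(48 * ξ * (ξ + 1) * (ξ + 2)) / (ξ ^ 2 + 2 * ξ + 2) ^ 4)|})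
    (τ : ℝ) (hτ : 0 < τ) :
    ‖NormedSpace.exp (-(τ • A)) - padeMatrix (τ • A)‖ ≤
      (‖Q‖ * ‖Qᵀ‖) * M * lmax ^ 3 * τ ^ 3 / 6 := by
  have hQinv : Q⁻¹ = Qᵀ := inv_eq_left_inv hQ
  have hQunit : IsUnit Q := (isUnit_iff_isUnit_det Q).mpr (isUnit_det_of_left_inverse hQ)
  have hτA : τ • A = Q * diagonal (τ • diag D) * Q⁻¹ := by
    rw [hA, hQinv, diagonal_smul, (isDiag_iff_diagonal_diag D).mp hDdiag, mul_smul_comm,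
      smul_mul_assoc]
  have hlmax_nonneg : 0 ≤ lmax := by
    obtain ⟨i, rfl⟩ := hlmax.1
    exact (hDpos i).le
  have hdiag : ‖NormedSpace.exp (-diagonal (τ • diag D)) - padeMatrix (diagonal (τ • diag D))‖ ≤
      M * (τ * lmax) ^ 3 / 6 := by
    rw [show M = padeErrorThirdDerivSup from hM]
    exact norm_exp_neg_diagonal_sub_padeMatrix_le (fun i => (mul_pos hτ (hDpos i)).le)
      (fun i => mul_le_mul_of_nonneg_left (hlmax.2 ⟨i, rfl⟩) hτ.le) (by positivity)
  rw [hτA, ← neg_mul, ← mul_neg, Matrix.exp_conj _ _ hQunit, padeMatrix_conj hQunit, ← sub_mul,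
    ← mul_sub]
  calc _ ≤ ‖Q‖ * ‖NormedSpace.exp (-diagonal (τ • diag D)) -
        padeMatrix (diagonal (τ • diag D))‖ * ‖Q⁻¹‖ := norm_mul₃_le
    _ ≤ ‖Q‖ * (M * (τ * lmax) ^ 3 / 6) * ‖Qᵀ‖ := by rw [hQinv]; gcongr
    _ = (‖Q‖ * ‖Qᵀ‖) * M * lmax ^ 3 * τ ^ 3 / 6 := by ring
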